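/- Let t, d, e, f ∈ ℝ with 5e + f > 0, let s₊ ≥ 0 minimise g over [0, ∞) and let s₋ ≤ 0 minimise g over (−∞, 0], and assume g(s₋) < g(s₊). Then there exists ε₀ > 0 such that for every 0 < ε < ε₀ there exists a Lipschitz function s : [0,1] → ℝ with s(1) = s₊ and I[s] < (1/3)g(s₊). Consequently, for ε < ε₀, no function that is nonnegative on [0,1] can minimise I over the class of Lipschitz functions σ : [0,1] → ℝ with σ(1) = s₊; in particular any global minimiser of I attains negative values. -/

import Mathlib

/-!
The competitor equal to `s₋` on `[0, 1 - δ]` and rising linearly to `s₊` on `[1 - δ, 1]` has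
energy at most `g(s₋)/3 + O(δ) + O(ε²/δ)`: away from the boundary layer the elastic terms cost
only `O(ε²)`. Taking first `δ` and then `ε` small makes this smaller than `g(s₊)/3`. On the other
hand, a nonnegative `σ` satisfies `g(σ) ≥ g(s₊)` pointwise, so `I[σ] ≥ ∫₀¹ g(s₊) r² dr = g(s₊)/3`;
for a non-integrable integrand the same bound holds because `g(s₊) ≤ g(0) = 0`.
-/

noncomputable section
open MeasureTheory

/-- The sixth-order bulk potential restricted to uniaxial Q-tensors:
`g(s) = (t/3)s² − (2√6/9)s³ + (2/9)s⁴ + (4d/135)s⁵ + (4e/81)s⁶ + (2(f−e)/243)s⁶`. -/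
def g (t d e f s : ℝ) : ℝ :=
  t / 3 * s ^ 2 - 2 * Real.sqrt 6 / 9 * s ^ 3 + 2 / 9 * s ^ 4
    + 4 * d / 135 * s ^ 5 + 4 * e / 81 * s ^ 6 + 2 * (f - e) / 243 * s ^ 6

/-- The radial hedgehog energy
`I[s] = ∫₀¹ [ε²((1/2)s'(r)² + (2/r²)s(r)²) + g(s(r))] r² dr`. -/
def rhEnergy (ε t d e f : ℝ) (s : ℝ → ℝ) : ℝ :=
  ∫ r in (0:ℝ)..1,
    (ε ^ 2 * (1 / 2 * (deriv s r) ^ 2 + 2 / r ^ 2 * (s r) ^ 2) + g t d e f (s r)) * r ^ 2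

open Set Filter Topology intervalIntegral

theorem continuous_g (t d e f : ℝ) : Continuous (g t d e f) := by
  unfold g; fun_prop

theorem g_zero (t d e f : ℝ) : g t d e f 0 = 0 := by
  simp [g]

def radialEnergy (ε : ℝ) (G s : ℝ → ℝ) : ℝ :=
  ∫ r in (0:ℝ)..1,
    (ε ^ 2 * (1 / 2 * (deriv s r) ^ 2 + 2 / r ^ 2 * (s r) ^ 2) + G (s r)) * r ^ 2

theorem rhEnergy_eq_radialEnergy (ε t d e f : ℝ) (s : ℝ → ℝ) :
    rhEnergy ε t d e f s = radialEnergy ε (g t d e f) s :=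
  rfl

/-- The integrand of `radialEnergy` with `r²` multiplied out; unlike that integrand it does not
pass through the junk value `2 / 0 ^ 2 = 0` at `r = 0`. -/
def radialDensity (ε : ℝ) (G s : ℝ → ℝ) (r : ℝ) : ℝ :=
  ε ^ 2 * (1 / 2 * (deriv s r) ^ 2 * r ^ 2 + 2 * (s r) ^ 2) + G (s r) * r ^ 2

section RadialEnergy

variable {ε : ℝ} {G s : ℝ → ℝ}

theorem radialEnergy_eq_integral_radialDensity :
    radialEnergy ε G s = ∫ r in (0:ℝ)..1, radialDensity ε G s r := by
  refine integral_congr_ae (ae_of_all _ fun r hr => ?_)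
  rw [uIoc_of_le zero_le_one] at hr
  have hr0 : r ≠ 0 := hr.1.ne'
  simp only [radialDensity]
  field_simp

theorem intervalIntegrable_radialDensity (hG : Continuous G) {K : NNReal} (hs : LipschitzWith K s)
    (a b : ℝ) : IntervalIntegrable (radialDensity ε G s) volume a b := by
  have hderiv : IntervalIntegrable (fun r => deriv s r ^ 2) volume a b := by
    refine (IntegrableOn.of_bound isCompact_uIcc.measure_lt_top
      ((measurable_deriv s).pow_const 2).aestronglyMeasurable (K ^ 2 : ℝ)
      (ae_of_all _ fun r => ?_)).intervalIntegrable
    have := norm_deriv_le_of_lipschitz (x₀ := r) hs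
    simp only [norm_pow, Real.norm_eq_abs] at this ⊢
    exact pow_le_pow_left₀ (abs_nonneg _) this 2
  have hcont : Continuous fun r => 2 * (s r) ^ 2 := by have := hs.continuous; fun_prop
  have hGcont : Continuous fun r => G (s r) * r ^ 2 := by have := hs.continuous; fun_prop
  exact (((hderiv.const_mul (1 / 2)).mul_continuousOn (continuous_pow 2).continuousOn).add
    (hcont.intervalIntegrable a b)).const_mul (ε ^ 2) |>.add (hGcont.intervalIntegrable a b)

theorem div_three_le_radialEnergy {m : ℝ} (hm : m ≤ 0)
    (hs : ∀ r ∈ Icc (0:ℝ) 1, m ≤ G (s r)) : m / 3 ≤ radialEnergy ε G s := by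
  rw [radialEnergy_eq_integral_radialDensity]
  by_cases hint : IntervalIntegrable (radialDensity ε G s) volume 0 1
  · calc
      m / 3 = ∫ r in (0:ℝ)..1, m * r ^ 2 := by
        rw [intervalIntegral.integral_const_mul, integral_pow]; ring
      _ ≤ ∫ r in (0:ℝ)..1, radialDensity ε G s r := by
        refine integral_mono_on zero_le_one ((intervalIntegrable_pow 2).const_mul m) hint
          fun r hr => ?_
        have hkin : 0 ≤ ε ^ 2 * (1 / 2 * (deriv s r) ^ 2 * r ^ 2 + 2 * (s r) ^ 2) := by
          positivity
        have := mul_le_mul_of_nonneg_right (hs r hr) (sq_nonneg r)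
        simp only [radialDensity]
        linarith
  · rw [integral_undef hint]
    linarith

theorem radialDensity_le {r C S M : ℝ} (hr : r ∈ Icc (0:ℝ) 1)
    (hderiv : |deriv s r| ≤ C) (hs : s r ^ 2 ≤ S) (hG : |G (s r)| ≤ M) :
    radialDensity ε G s r ≤ ε ^ 2 * (C ^ 2 / 2 + 2 * S) + M := by
  have hr2 : r ^ 2 ≤ 1 := pow_le_one₀ hr.1 hr.2
  have hderiv2 : deriv s r ^ 2 * r ^ 2 ≤ C ^ 2 :=
    (mul_le_of_le_one_right (sq_nonneg _) hr2).trans (sq_le_sq' (abs_le.1 hderiv).1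
      (abs_le.1 hderiv).2)
  have hpot : G (s r) * r ^ 2 ≤ M := by
    nlinarith [le_abs_self (G (s r)), abs_nonneg (G (s r)), sq_nonneg r]
  have hkin : 1 / 2 * deriv s r ^ 2 * r ^ 2 + 2 * s r ^ 2 ≤ C ^ 2 / 2 + 2 * S := by linarith
  have := mul_le_mul_of_nonneg_left hkin (sq_nonneg ε)
  simp only [radialDensity]
  linarith

end RadialEnergy

/-- Equal to `a` on `(-∞, 1 - δ]`, affine on `[1 - δ, 1]` and equal to `b` on `[1, ∞)`. -/
def ramp (a b δ r : ℝ) : ℝ :=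
  a + (b - a) * projIcc 0 1 zero_le_one ((r - (1 - δ)) / δ)

section Ramp

variable {a b δ : ℝ}

theorem ramp_of_le (hδ : 0 < δ) {r : ℝ} (hr : r ≤ 1 - δ) : ramp a b δ r = a := by
  have : (r - (1 - δ)) / δ ≤ 0 := div_nonpos_of_nonpos_of_nonneg (by linarith) hδ.le
  simp [ramp, projIcc_of_le_left _ this]

theorem ramp_one (hδ : δ ≠ 0) : ramp a b δ 1 = b := by
  simp [ramp, sub_sub_cancel, div_self hδ]

theorem ramp_mem_uIcc (r : ℝ) : ramp a b δ r ∈ uIcc a b := by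
  obtain ⟨h0, h1⟩ := (projIcc 0 1 zero_le_one ((r - (1 - δ)) / δ)).2
  rw [mem_uIcc]
  rcases le_total a b with hab | hab
  · left; constructor <;> simp only [ramp] <;> nlinarith
  · right; constructor <;> simp only [ramp] <;> nlinarith

theorem lipschitzWith_ramp (hδ : 0 < δ) :
    LipschitzWith (Real.toNNReal (|b - a| / δ)) (ramp a b δ) := by
  refine LipschitzWith.of_dist_le_mul fun x y => ?_
  have hproj := abs_projIcc_sub_projIcc (zero_le_one' ℝ)
    (c := (x - (1 - δ)) / δ) (d := (y - (1 - δ)) / δ)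
  rw [← sub_div, sub_sub_sub_cancel_right, abs_div, abs_of_pos hδ] at hproj
  rw [Real.dist_eq, Real.dist_eq, Real.coe_toNNReal _ (by positivity), ramp, ramp,
    add_sub_add_left_eq_sub, ← mul_sub, abs_mul, div_mul_comm, mul_comm |b - a|]
  exact mul_le_mul_of_nonneg_right hproj (abs_nonneg _)

theorem abs_deriv_ramp_le (hδ : 0 < δ) (r : ℝ) : |deriv (ramp a b δ) r| ≤ |b - a| / δ := by
  have := norm_deriv_le_of_lipschitz (x₀ := r) (lipschitzWith_ramp (a := a) (b := b) hδ)
  rwa [Real.coe_toNNReal _ (by positivity)] at this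

theorem deriv_ramp_of_lt (hδ : 0 < δ) {r : ℝ} (hr : r < 1 - δ) :
    deriv (ramp a b δ) r = 0 := by
  have : ramp a b δ =ᶠ[𝓝 r] fun _ => a :=
    eventually_of_mem (Iio_mem_nhds hr) fun x hx => ramp_of_le hδ (le_of_lt hx)
  rw [this.deriv_eq, deriv_const]

end Ramp

theorem radialEnergy_ramp_le {ε a b δ M : ℝ} {G : ℝ → ℝ} (hG : Continuous G)
    (hM : ∀ u ∈ uIcc a b, |G u| ≤ M) (hδ0 : 0 < δ) (hδ1 : δ ≤ 1) :
    radialEnergy ε G (ramp a b δ) ≤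
      ε ^ 2 * (2 * a ^ 2 * (1 - δ) + ((|b - a| / δ) ^ 2 / 2 + 2 * (a ^ 2 + b ^ 2)) * δ)
        + (G a * (1 - δ) ^ 3 / 3 + M * δ) := by
  have hint :=
    intervalIntegrable_radialDensity (ε := ε) hG (lipschitzWith_ramp (a := a) (b := b) hδ0)
  rw [radialEnergy_eq_integral_radialDensity,
    ← integral_add_adjacent_intervals (b := 1 - δ) (hint _ _) (hint _ _)]
  have hflat : ∫ r in (0:ℝ)..(1 - δ), radialDensity ε G (ramp a b δ) r
      = 2 * ε ^ 2 * a ^ 2 * (1 - δ) + G a * (1 - δ) ^ 3 / 3 := by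
    have hae : ∀ᵐ r, r ∈ uIoc 0 (1 - δ) →
        radialDensity ε G (ramp a b δ) r = 2 * ε ^ 2 * a ^ 2 + G a * r ^ 2 := by
      refine (Measure.ae_ne volume (1 - δ)).mono fun r hne hr => ?_
      rw [uIoc_of_le (by linarith)] at hr
      have hlt : r < 1 - δ := lt_of_le_of_ne hr.2 hne
      simp only [radialDensity, deriv_ramp_of_lt hδ0 hlt, ramp_of_le hδ0 hlt.le]
      ring
    rw [integral_congr_ae hae, integral_add intervalIntegrable_const
      (intervalIntegrable_pow 2 |>.const_mul _), intervalIntegral.integral_const,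
      intervalIntegral.integral_const_mul, integral_pow,
      smul_eq_mul]
    ring
  have hslope : ∫ r in (1 - δ)..1, radialDensity ε G (ramp a b δ) r
      ≤ ∫ _ in (1 - δ)..1, (ε ^ 2 * ((|b - a| / δ) ^ 2 / 2 + 2 * (a ^ 2 + b ^ 2)) + M) := by
    refine integral_mono_on (by linarith) (hint _ _) intervalIntegrable_const fun r hr => ?_
    have hmem := ramp_mem_uIcc (a := a) (b := b) (δ := δ) r
    refine radialDensity_le ⟨by linarith [hr.1], hr.2⟩ (abs_deriv_ramp_le hδ0 r) ?_ (hM _ hmem)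
    rcases mem_uIcc.1 hmem with h | h <;> rcases le_total 0 (ramp a b δ r) with h0 | h0 <;>
      nlinarith [sq_nonneg a, sq_nonneg b]
  rw [intervalIntegral.integral_const, smul_eq_mul] at hslope
  rw [hflat]
  nlinarith

theorem exists_radialEnergy_ramp_lt {a b : ℝ} {G : ℝ → ℝ} (hG : Continuous G)
    (hab : G a < G b) :
    ∃ δ, 0 < δ ∧ ∀ᶠ ε in 𝓝 0, radialEnergy ε G (ramp a b δ) < G b / 3 := by
  obtain ⟨M, hM⟩ := (isCompact_uIcc (a := a) (b := b)).exists_bound_of_continuousOn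
    hG.continuousOn
  set B : ℝ → ℝ := fun δ => G a * (1 - δ) ^ 3 / 3 + M * δ
  have hB : Tendsto B (𝓝[>] 0) (𝓝 (G a / 3)) := by
    have : Tendsto B (𝓝 0) (𝓝 (B 0)) := (by fun_prop : Continuous B).tendsto 0
    simpa [B] using this.mono_left nhdsWithin_le_nhds
  have hlim : G a / 3 < G b / 3 := by linarith
  obtain ⟨δ, hδB, hδ⟩ :=
    ((hB.eventually (gt_mem_nhds hlim)).and (Ioo_mem_nhdsGT one_pos)).exists
  refine ⟨δ, hδ.1, ?_⟩
  set A := 2 * a ^ 2 * (1 - δ) + ((|b - a| / δ) ^ 2 / 2 + 2 * (a ^ 2 + b ^ 2)) * δ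
  have hE : Tendsto (fun ε : ℝ => ε ^ 2 * A + B δ) (𝓝 0) (𝓝 (B δ)) := by
    simpa using ((by fun_prop : Continuous fun ε : ℝ => ε ^ 2 * A + B δ).tendsto 0)
  filter_upwards [hE.eventually (gt_mem_nhds hδB)] with ε hε
  exact (radialEnergy_ramp_le hG (fun u hu => hM u hu) hδ.1 hδ.2.le).trans_lt hε

theorem global_minimiser_negative_low_temperature_general
    (t d e f sp sm : ℝ)
    (hminp : ∀ u : ℝ, 0 ≤ u → g t d e f sp ≤ g t d e f u)
    (hlt : g t d e f sm < g t d e f sp) :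
    ∃ ε₀ : ℝ, 0 < ε₀ ∧ ∀ ε : ℝ, 0 < ε → ε < ε₀ →
      (∃ s : ℝ → ℝ, (∃ K : NNReal, LipschitzWith K s) ∧ s 1 = sp ∧
        rhEnergy ε t d e f s < 1 / 3 * g t d e f sp) ∧
      (∀ σ : ℝ → ℝ, (∃ K : NNReal, LipschitzWith K σ) → σ 1 = sp →
        (∀ τ : ℝ → ℝ, (∃ K : NNReal, LipschitzWith K τ) → τ 1 = sp →
          rhEnergy ε t d e f σ ≤ rhEnergy ε t d e f τ) →
        ∃ r ∈ Set.Icc (0:ℝ) 1, σ r < 0) := by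
  obtain ⟨δ, hδ, hsmall⟩ := exists_radialEnergy_ramp_lt (continuous_g t d e f) hlt
  obtain ⟨ε₀, hε₀, hε₀small⟩ := Metric.eventually_nhds_iff.1 hsmall
  have hramp : ∃ K : NNReal, LipschitzWith K (ramp sm sp δ) := ⟨_, lipschitzWith_ramp hδ⟩
  have hsp_nonpos : g t d e f sp ≤ 0 := g_zero t d e f ▸ hminp 0 le_rfl
  refine ⟨ε₀, hε₀, fun ε hε hεε₀ => ?_⟩
  have hcompetitor : rhEnergy ε t d e f (ramp sm sp δ) < 1 / 3 * g t d e f sp := by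
    have := hε₀small (by rwa [Real.dist_0_eq_abs, abs_of_pos hε])
    rw [rhEnergy_eq_radialEnergy]
    linarith
  refine ⟨⟨ramp sm sp δ, hramp, ramp_one hδ.ne', hcompetitor⟩, fun σ _ _ hσmin => ?_⟩
  by_contra! hσ
  have hσ_energy := div_three_le_radialEnergy (ε := ε) hsp_nonpos fun r hr => hminp _ (hσ r hr)
  have := hσmin _ hramp (ramp_one hδ.ne')
  simp only [rhEnergy_eq_radialEnergy] at this hcompetitor
  linarith

/-- Deep in the nematic phase (`g(s₋) < g(s₊)`), for sufficiently small `ε`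
there is a Lipschitz competitor with energy below `(1/3)g(s₊)`; consequently
every Lipschitz global minimiser of `I` attains negative values. -/
theorem global_minimiser_negative_low_temperature
    (t d e f sp sm : ℝ) (h5ef : 0 < 5 * e + f)
    (hsp : 0 ≤ sp) (hminp : ∀ u : ℝ, 0 ≤ u → g t d e f sp ≤ g t d e f u)
    (hsm : sm ≤ 0) (hminm : ∀ u : ℝ, u ≤ 0 → g t d e f sm ≤ g t d e f u)
    (hlt : g t d e f sm < g t d e f sp) :
    ∃ ε₀ : ℝ, 0 < ε₀ ∧ ∀ ε : ℝ, 0 < ε → ε < ε₀ →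
      (∃ s : ℝ → ℝ, (∃ K : NNReal, LipschitzWith K s) ∧ s 1 = sp ∧
        rhEnergy ε t d e f s < 1 / 3 * g t d e f sp) ∧
      (∀ σ : ℝ → ℝ, (∃ K : NNReal, LipschitzWith K σ) → σ 1 = sp →
        (∀ τ : ℝ → ℝ, (∃ K : NNReal, LipschitzWith K τ) → τ 1 = sp →
          rhEnergy ε t d e f σ ≤ rhEnergy ε t d e f τ) →
        ∃ r ∈ Set.Icc (0:ℝ) 1, σ r < 0) :=
  global_minimiser_negative_low_temperature_general t d e f sp sm hminp hlt
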